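/- For each i, the relation σ_[i] on the direct power (IO∞(ℤ))ⁿ defined by α σ_[i] β iff there is an idempotent ε ∈ IO∞(ℤ) with α·εᵢ° = β·εᵢ° (where εᵢ° is the n-tuple with ε in coordinate i and identities elsewhere) is a congruence. -/

import Mathlib

/-- A partial injective self-map of ℤ (encoded as a `PEquiv`) is monotone. -/
def PMono (f : ℤ ≃. ℤ) : Prop :=
  ∀ x y a b : ℤ, a ∈ f x → b ∈ f y → x ≤ y → a ≤ b

/-- Domain of a partial injective self-map of ℤ. -/
def PDom (f : ℤ ≃. ℤ) : Set ℤ := {x | (f x).isSome}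

/-- Range of a partial injective self-map of ℤ. -/
def PRan (f : ℤ ≃. ℤ) : Set ℤ := {y | (f.symm y).isSome}

/-- Membership in IO∞(ℤ): injective (built into `PEquiv`), monotone,
with cofinite domain and cofinite range. -/
def IOZ (f : ℤ ≃. ℤ) : Prop :=
  PMono f ∧ (PDom f)ᶜ.Finite ∧ (PRan f)ᶜ.Finite

/-- Idempotent element of IO∞(ℤ). -/
def IsIdem (ε : ℤ ≃. ℤ) : Prop := ε.trans ε = ε

/-- Membership in the direct power (IO∞(ℤ))ⁿ. -/
def IOZn (n : ℕ) (α : Fin n → ℤ ≃. ℤ) : Prop := ∀ i, IOZ (α i)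

/-- Coordinatewise composition on the direct power (α then β, as in the paper). -/
def mulN {n : ℕ} (α β : Fin n → ℤ ≃. ℤ) : Fin n → ℤ ≃. ℤ := fun i => (α i).trans (β i)

/-- The identity 𝕀 of (IO∞(ℤ))ⁿ. -/
def oneN (n : ℕ) : Fin n → ℤ ≃. ℤ := fun _ => PEquiv.refl ℤ

/-- εᵢ°: the tuple with ε in coordinate i and identities elsewhere. -/
def epsT {n : ℕ} (i : Fin n) (ε : ℤ ≃. ℤ) : Fin n → ℤ ≃. ℤ :=
  fun j => if j = i then ε else PEquiv.refl ℤ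

/-- A congruence on the semigroup (IO∞(ℤ))ⁿ (relative to the carrier `IOZn n`). -/
def IsCongOn (n : ℕ) (ρ : (Fin n → ℤ ≃. ℤ) → (Fin n → ℤ ≃. ℤ) → Prop) : Prop :=
  (∀ α, IOZn n α → ρ α α) ∧
  (∀ α β, IOZn n α → IOZn n β → ρ α β → ρ β α) ∧
  (∀ α β γ, IOZn n α → IOZn n β → IOZn n γ → ρ α β → ρ β γ → ρ α γ) ∧
  (∀ α β γ, IOZn n α → IOZn n β → IOZn n γ → ρ α β →
    ρ (mulN α γ) (mulN β γ) ∧ ρ (mulN γ α) (mulN γ β))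

/-- The congruence σ_[i]. -/
def sigmaI (n : ℕ) (i : Fin n) (α β : Fin n → ℤ ≃. ℤ) : Prop :=
  ∃ ε : ℤ ≃. ℤ, IOZ ε ∧ IsIdem ε ∧ mulN α (epsT i ε) = mulN β (epsT i ε)

/-- D(α,β): the set of coordinates where α and β differ. -/
def Dset {n : ℕ} (α β : Fin n → ℤ ≃. ℤ) : Set (Fin n) := {i | α i ≠ β i}

/-- Idempotent tuple. -/
def IsIdemN {n : ℕ} (ε : Fin n → ℤ ≃. ℤ) : Prop := ∀ i, (ε i).trans (ε i) = ε i

/-- σ_[i₁,…,i_k] for the set of indices t: α and β agree after right multiplication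
by a product ε°_{i₁}⋯ε°_{i_k} of idempotents supported on t. -/
def sigmaSet (n : ℕ) (t : Finset (Fin n)) (α β : Fin n → ℤ ≃. ℤ) : Prop :=
  ∃ ε : Fin n → ℤ ≃. ℤ, IOZn n ε ∧ IsIdemN ε ∧ (∀ i ∉ t, ε i = PEquiv.refl ℤ) ∧
    mulN α ε = mulN β ε


/-! Idempotents of the symmetric inverse monoid are partial identities, so any two of them
commute. Hence σ (agreement after right multiplication by an idempotent) is transitive, with
the product `εδ` of the two witnesses as new witness, and it is trivially compatible with left
multiplication. For right multiplication by `γ` the idempotent `γ⁻¹εγ` works, because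
`γ(γ⁻¹εγ) = (γγ⁻¹)εγ = ε(γγ⁻¹γ) = εγ`. All witnesses stay in IO∞(ℤ) since it is closed under
composition and inversion. Finally σ_[i] is σ in coordinate `i` and equality elsewhere. -/

namespace PEquiv

variable {α β : Type*}

theorem self_trans_symm_trans (f : α ≃. β) : (f.trans f.symm).trans f = f := by
  ext a b
  rw [← Option.mem_def, ← Option.mem_def, mem_trans]
  simp only [self_trans_symm, mem_ofSet_iff]
  constructor
  · rintro ⟨c, ⟨rfl, -⟩, hb⟩
    exact hb
  · intro hb
    exact ⟨a, ⟨rfl, Option.isSome_iff_exists.2 ⟨b, hb⟩⟩, hb⟩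

theorem eq_of_mem_of_trans_self {e : α ≃. α} (he : e.trans e = e) {a b : α} (hb : b ∈ e a) :
    b = a := by
  have hb₂ := hb
  rw [← he, mem_trans] at hb₂
  obtain ⟨c, hc, hbc⟩ := hb₂
  obtain rfl : c = b := Option.mem_unique hc hb
  exact e.inj hbc hb

theorem trans_comm_of_trans_self {e f : α ≃. α} (he : e.trans e = e) (hf : f.trans f = f) :
    e.trans f = f.trans e := by
  suffices key : ∀ {e f : α ≃. α}, e.trans e = e → f.trans f = f →
      ∀ a b, b ∈ e.trans f a → b ∈ f.trans e a from
    ext fun a => Option.ext fun b => ⟨key he hf a b, key hf he a b⟩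
  intro e f he hf a b hb
  obtain ⟨c, hc, hbc⟩ := (mem_trans _ _ _ _).1 hb
  obtain rfl := eq_of_mem_of_trans_self he hc
  obtain rfl := eq_of_mem_of_trans_self hf hbc
  exact (mem_trans _ _ _ _).2 ⟨b, hbc, hc⟩

theorem self_trans_symm_trans_self (f : α ≃. β) :
    (f.trans f.symm).trans (f.trans f.symm) = f.trans f.symm := by
  rw [← trans_assoc, self_trans_symm_trans]

theorem trans_trans_self_of_trans_self {e f : α ≃. α} (he : e.trans e = e)
    (hf : f.trans f = f) : (e.trans f).trans (e.trans f) = e.trans f := by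
  rw [trans_assoc, ← trans_assoc f, ← trans_comm_of_trans_self he hf, trans_assoc, hf,
    ← trans_assoc, he]

def conj (g : α ≃. β) (e : α ≃. α) : β ≃. β := (g.symm.trans e).trans g

theorem trans_conj {e : α ≃. α} (he : e.trans e = e) (g : α ≃. β) :
    g.trans (g.conj e) = e.trans g := by
  calc g.trans (g.conj e) = ((g.trans g.symm).trans e).trans g := by
        simp only [conj, trans_assoc]
    _ = (e.trans (g.trans g.symm)).trans g := by
        rw [trans_comm_of_trans_self (self_trans_symm_trans_self g) he]
    _ = e.trans g := by rw [trans_assoc, self_trans_symm_trans]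

theorem conj_trans_conj {e : α ≃. α} (he : e.trans e = e) (g : α ≃. β) :
    (g.conj e).trans (g.conj e) = g.conj e := by
  calc (g.conj e).trans (g.conj e) = (g.symm.trans e).trans (g.trans (g.conj e)) := by
        simp only [conj, trans_assoc]
    _ = g.conj e := by rw [trans_conj he, trans_assoc, ← trans_assoc e, he, conj, trans_assoc]

end PEquiv

theorem PMono.trans {f g : ℤ ≃. ℤ} (hf : PMono f) (hg : PMono g) : PMono (f.trans g) := by
  intro x y a b ha hb hxy
  obtain ⟨c, hc, hac⟩ := (PEquiv.mem_trans _ _ _ _).1 ha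
  obtain ⟨d, hd, hbd⟩ := (PEquiv.mem_trans _ _ _ _).1 hb
  exact hg c d a b hac hbd (hf x y c d hc hd hxy)

theorem PMono.symm {f : ℤ ≃. ℤ} (hf : PMono f) : PMono f.symm := by
  intro x y a b ha hb hxy
  rw [PEquiv.mem_iff_mem] at ha hb
  by_contra! hba
  obtain rfl : x = y := le_antisymm hxy (hf b a y x hb ha hba.le)
  exact hba.ne (f.inj hb ha)

theorem pMono_refl : PMono (PEquiv.refl ℤ) := by
  rintro x y a b ⟨⟩ ⟨⟩ hxy
  exact hxy

theorem finite_compl_pDom_trans {f g : ℤ ≃. ℤ} (hf : (PDom f)ᶜ.Finite) (hg : (PDom g)ᶜ.Finite) :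
    (PDom (f.trans g))ᶜ.Finite := by
  refine (hf.union ((hg.image f.symm).preimage (Option.some_injective _).injOn)).subset ?_
  intro x hx
  simp only [PDom, Set.mem_union, Set.mem_compl_iff, Set.mem_ofPred_eq, Set.mem_preimage,
    Set.mem_image] at hx ⊢
  cases hfx : f x with
  | none => simp
  | some y =>
    refine .inr ⟨y, fun hy => hx ?_, f.eq_some_iff.2 hfx⟩
    change ((f x).bind g).isSome
    rwa [hfx]

theorem IOZ.trans {f g : ℤ ≃. ℤ} (hf : IOZ f) (hg : IOZ g) : IOZ (f.trans g) := by
  refine ⟨hf.1.trans hg.1, finite_compl_pDom_trans hf.2.1 hg.2.1, ?_⟩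
  have := finite_compl_pDom_trans hg.2.2 hf.2.2
  rwa [← PEquiv.symm_trans_rev] at this

theorem IOZ.symm {f : ℤ ≃. ℤ} (hf : IOZ f) : IOZ f.symm :=
  ⟨hf.1.symm, hf.2.2, hf.2.1⟩

theorem ioz_refl : IOZ (PEquiv.refl ℤ) := by
  refine ⟨pMono_refl, Set.finite_empty.subset fun x hx => hx ?_,
    Set.finite_empty.subset fun x hx => hx ?_⟩ <;> simp [PDom, PRan]

theorem IOZ.conj {g e : ℤ ≃. ℤ} (hg : IOZ g) (he : IOZ e) : IOZ (g.conj e) :=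
  (hg.symm.trans he).trans hg

def SigmaRel (f g : ℤ ≃. ℤ) : Prop :=
  ∃ ε : ℤ ≃. ℤ, IOZ ε ∧ IsIdem ε ∧ f.trans ε = g.trans ε

theorem SigmaRel.refl (f : ℤ ≃. ℤ) : SigmaRel f f :=
  ⟨PEquiv.refl ℤ, ioz_refl, PEquiv.trans_refl _, rfl⟩

theorem SigmaRel.symm {f g : ℤ ≃. ℤ} : SigmaRel f g → SigmaRel g f
  | ⟨ε, hε, hεε, h⟩ => ⟨ε, hε, hεε, h.symm⟩

theorem SigmaRel.trans {f g h : ℤ ≃. ℤ} : SigmaRel f g → SigmaRel g h → SigmaRel f h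
  | ⟨ε, hε, hεε, hfg⟩, ⟨δ, hδ, hδδ, hgh⟩ => by
    have hcomm := PEquiv.trans_comm_of_trans_self hεε hδδ
    refine ⟨ε.trans δ, hε.trans hδ, PEquiv.trans_trans_self_of_trans_self hεε hδδ, ?_⟩
    calc f.trans (ε.trans δ) = (g.trans ε).trans δ := by rw [← hfg, PEquiv.trans_assoc]
      _ = (g.trans δ).trans ε := by simp only [PEquiv.trans_assoc, hcomm]
      _ = h.trans (ε.trans δ) := by rw [hgh, PEquiv.trans_assoc, hcomm]

theorem SigmaRel.mul_left {f g : ℤ ≃. ℤ} (h : ℤ ≃. ℤ) :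
    SigmaRel f g → SigmaRel (h.trans f) (h.trans g)
  | ⟨ε, hε, hεε, hfg⟩ => ⟨ε, hε, hεε, by rw [PEquiv.trans_assoc, hfg, PEquiv.trans_assoc]⟩

theorem SigmaRel.mul_right {f g h : ℤ ≃. ℤ} (hh : IOZ h) :
    SigmaRel f g → SigmaRel (f.trans h) (g.trans h)
  | ⟨ε, hε, hεε, hfg⟩ => ⟨h.conj ε, hh.conj hε, PEquiv.conj_trans_conj hεε h, by
      simp only [PEquiv.trans_assoc, PEquiv.trans_conj hεε]
      rw [← PEquiv.trans_assoc, hfg, PEquiv.trans_assoc]⟩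

theorem mulN_epsT_eq_iff {n : ℕ} {i : Fin n} {α β : Fin n → ℤ ≃. ℤ} {ε : ℤ ≃. ℤ} :
    mulN α (epsT i ε) = mulN β (epsT i ε) ↔
      (∀ j ≠ i, α j = β j) ∧ (α i).trans ε = (β i).trans ε := by
  simp only [funext_iff, mulN, epsT]
  constructor
  · intro h
    exact ⟨fun j hj => by simpa [hj] using h j, by simpa using h i⟩
  · rintro ⟨hne, hi⟩ j
    by_cases hj : j = i
    · subst hj
      simpa using hi
    · simpa [hj] using hne j hj

theorem sigmaI_iff {n : ℕ} {i : Fin n} {α β : Fin n → ℤ ≃. ℤ} :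
    sigmaI n i α β ↔ (∀ j ≠ i, α j = β j) ∧ SigmaRel (α i) (β i) := by
  simp only [sigmaI, SigmaRel, mulN_epsT_eq_iff]
  constructor
  · rintro ⟨ε, hε, hεε, hne, hi⟩
    exact ⟨hne, ε, hε, hεε, hi⟩
  · rintro ⟨hne, ε, hε, hεε, hi⟩
    exact ⟨ε, hε, hεε, hne, hi⟩

/-- σ_[i] is a congruence on (IO∞(ℤ))ⁿ. -/
theorem stmt12 (n : ℕ) (i : Fin n) : IsCongOn n (sigmaI n i) := by
  refine ⟨fun α _ => sigmaI_iff.2 ⟨fun _ _ => rfl, .refl _⟩, fun α β _ _ h => ?_,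
    fun α β γ _ _ _ h h' => ?_, fun α β γ _ _ hγ h => ?_⟩ <;>
    obtain ⟨hne, hσ⟩ := sigmaI_iff.1 h
  · exact sigmaI_iff.2 ⟨fun j hj => (hne j hj).symm, hσ.symm⟩
  · obtain ⟨hne', hσ'⟩ := sigmaI_iff.1 h'
    exact sigmaI_iff.2 ⟨fun j hj => (hne j hj).trans (hne' j hj), hσ.trans hσ'⟩
  · refine ⟨sigmaI_iff.2 ⟨fun j hj => ?_, hσ.mul_right (hγ i)⟩,
      sigmaI_iff.2 ⟨fun j hj => ?_, hσ.mul_left (γ i)⟩⟩ <;>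
      simp only [mulN, hne j hj]
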